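/- Let c = ∏_{i<n} [l_i, u_i] ⊆ ℤ^n and v ∈ c. Then the cardinality of c satisfies |c| = 1 + Σ_{a<n} (v_a − l_a)·∏_{i>a}(u_i − l_i + 1) + Σ_{a<n} (u_a − v_a)·∏_{i>a}(u_i − l_i + 1). -/
import Mathlib

lemma telescope_prod (n : ℕ) (P : Fin n → ℤ) :
    ∏ i, P i =
      1 + ∑ a : Fin n, (P a - 1) * ∏ i ∈ Finset.univ.filter (fun i => a < i), P i := by
  set F : ℕ → ℤ := fun a => ∏ i ∈ Finset.univ.filter (fun i : Fin n => a ≤ i.val), P i with hF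
  have hF0 : F 0 = ∏ i, P i := by simp [hF]
  have hFn : F n = 1 := by
    have : Finset.univ.filter (fun i : Fin n => n ≤ i.val) = ∅ := by
      ext i; simp [Nat.not_le.mpr i.is_lt]
    simp [hF, this]
  have hstep : ∀ a : Fin n, F a.val = P a * F (a.val + 1) := by
    intro a
    have hset : Finset.univ.filter (fun i : Fin n => a.val ≤ i.val)
        = insert a (Finset.univ.filter (fun i : Fin n => a.val + 1 ≤ i.val)) := by
      ext i; simp [Fin.ext_iff]; omega
    have hnot : a ∉ Finset.univ.filter (fun i : Fin n => a.val + 1 ≤ i.val) := by simp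
    simp only [hF]
    rw [hset, Finset.prod_insert hnot]
  have htel : ∑ a ∈ Finset.range n, (F a - F (a + 1)) = F 0 - F n :=
    Finset.sum_range_sub' F n
  have hsum : ∑ a : Fin n, (F a.val - F (a.val + 1)) = F 0 - F n := by
    rw [← htel, Finset.sum_range (fun a => F a - F (a + 1))]
  have hterm : ∀ a : Fin n,
      F a.val - F (a.val + 1) = (P a - 1) * ∏ i ∈ Finset.univ.filter (fun i => a < i), P i := by
    intro a
    have : F (a.val + 1) = ∏ i ∈ Finset.univ.filter (fun i => a < i), P i := by
      have hf : Finset.univ.filter (fun i : Fin n => a.val + 1 ≤ i.val)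
          = Finset.univ.filter (fun i => a < i) := by
        ext i
        simp only [Finset.mem_filter, Finset.mem_univ, true_and, Fin.lt_def]
        omega
      simp only [hF, hf]
    rw [this.symm, hstep a]; ring
  rw [Finset.sum_congr rfl (fun a _ => hterm a), hF0, hFn] at hsum
  linarith [hsum]

theorem stmt_4 (n : ℕ) (l u : Fin n → ℤ) (hlu : ∀ i, l i ≤ u i)
    (v : Fin n → ℤ) (hv : v ∈ Finset.Icc l u) :
    ((Finset.Icc l u).card : ℤ) =
      1 + (∑ a : Fin n, (v a - l a) *
            ∏ i ∈ Finset.univ.filter (fun i => a < i), (u i - l i + 1))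
        + (∑ a : Fin n, (u a - v a) *
            ∏ i ∈ Finset.univ.filter (fun i => a < i), (u i - l i + 1)) := by
  have hcard : ((Finset.Icc l u).card : ℤ) = ∏ i, (u i - l i + 1) := by
    rw [Pi.card_Icc]
    push_cast
    refine Finset.prod_congr rfl fun i _ => ?_
    rw [Int.card_Icc]
    rw [Int.toNat_of_nonneg (by linarith [hlu i])]
    push_cast; ring
  rw [hcard, telescope_prod n (fun i => u i - l i + 1)]
  rw [add_assoc, ← Finset.sum_add_distrib]
  congr 1
  refine Finset.sum_congr rfl fun a _ => ?_
  ring
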